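/- arXiv:nlin/0611008 — 2 statements merged into one kernel-verified Lean document; each statement's English description precedes it below -/
import Mathlib

section
/- Let μ(x) = Π_{i=1}^N sin^a|x_i − x_{i+1}| and x̄ = (1/N) Σ_i x_i. Then for every spin state |s⟩ ∈ Σ, the Σ-valued functions Ψ_1 = μ · Σ_i cos(2(x_i − x̄)) |s_i⟩ and Ψ_2 = μ · Σ_i sin(2(x_i − x̄)) |s_i⟩ satisfy H_2 Ψ_{1,2} = (2Na² + 4(2a + 1 − 1/N)) Ψ_{1,2} at every point of C_2. -/
noncomputable section

/-- The spin space `Σ`: complex functions on `Fin N → Fin d`. -/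
abbrev Spin (N d : ℕ) : Type := (Fin N → Fin d) → ℂ

/-- Partial derivative `∂_i F` of a function of `N` real variables. -/
noncomputable def pd {N : ℕ} {E : Type} [NormedAddCommGroup E] [NormedSpace ℝ E]
    (i : Fin N) (F : (Fin N → ℝ) → E) : (Fin N → ℝ) → E :=
  fun x => fderiv ℝ F x (Pi.single i 1)

/-- The spin exchange operator `S_{ij}`, transposing the `i`-th and `j`-th spin slots. -/
def Sop {N d : ℕ} (i j : Fin N) (v : Spin N d) : Spin N d :=
  fun c => v (c ∘ Equiv.swap i j)

/-- The action of a permutation `π ∈ S_N` on the spin space, permuting the `N` spin slots. -/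
def spinPerm {N d : ℕ} (π : Equiv.Perm (Fin N)) (v : Spin N d) : Spin N d :=
  fun c => v (c ∘ π)

/-- The spin vector `|s_i⟩ = (1/N!) ∑_{π ∈ S_N, π(1) = i} π |s⟩`. -/
noncomputable def sComp {N d : ℕ} [NeZero N] (s : Spin N d) (i : Fin N) : Spin N d :=
  (N.factorial : ℂ)⁻¹ •
    ∑ π ∈ Finset.univ.filter (fun π : Equiv.Perm (Fin N) => π 0 = i), spinPerm π s

/-- The configuration space `C_2 = {x : x_1 < ⋯ < x_N, x_N - x_1 < π}`
(here `x (-1)` is the last coordinate `x_N`). -/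
def C2 (N : ℕ) [NeZero N] : Set (Fin N → ℝ) :=
  {x | StrictMono x ∧ x (-1) - x 0 < Real.pi}

/-- The Hamiltonian `H_2 = -∑ i ∂_i² + V_2` with
`V_2 = 2a² ∑ i cot(x_i - x_{i-1}) cot(x_i - x_{i+1})
  + 2a ∑ i csc²(x_i - x_{i+1}) (a - S_{i,i+1})` (indices cyclic). -/
noncomputable def H2 {N d : ℕ} [NeZero N] (a : ℝ)
    (Ψ : (Fin N → ℝ) → Spin N d) : (Fin N → ℝ) → Spin N d :=
  fun x =>
    -(∑ i : Fin N, pd i (pd i Ψ) x)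
    + (2 * a ^ 2 * ∑ i : Fin N,
        (Real.cos (x i - x (i - 1)) / Real.sin (x i - x (i - 1))) *
          (Real.cos (x i - x (i + 1)) / Real.sin (x i - x (i + 1)))) • Ψ x
    + (2 * a) • ∑ i : Fin N,
        ((Real.sin (x i - x (i + 1))) ^ 2)⁻¹ • (a • Ψ x - Sop i (i + 1) (Ψ x))

/-- The gauge factor `μ(x) = ∏ i sin^a |x_i - x_{i+1}|` (indices cyclic). -/
noncomputable def mu2 {N : ℕ} [NeZero N] (a : ℝ) (x : Fin N → ℝ) : ℝ :=
  ∏ i : Fin N, (Real.sin |x i - x (i + 1)|) ^ a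

/-- The center of mass `x̄ = (1/N) ∑ i x_i`. -/
noncomputable def xbar {N : ℕ} (x : Fin N → ℝ) : ℝ := (∑ i : Fin N, x i) / N


set_option linter.unusedSectionVars false

namespace SCS

open Real Finset

variable {N : ℕ} [NeZero N]

noncomputable def eps (j : Fin N) : ℝ := if j + 1 = 0 then -1 else 1

noncomputable def muT (a : ℝ) (x : Fin N → ℝ) : ℝ :=
  ∏ j : Fin N, Real.sin (eps j * (x (j + 1) - x j)) ^ a

lemma C2_open : IsOpen (C2 N) := by
  have h1 : {x : Fin N → ℝ | StrictMono x} =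
      ⋂ p : Fin N × Fin N, {x | p.1 < p.2 → x p.1 < x p.2} := by
    ext x
    simp only [Set.mem_setOf_eq, Set.mem_iInter]
    exact ⟨fun h p hp => h hp, fun h i j hij => h (i, j) hij⟩
  have : IsOpen {x : Fin N → ℝ | StrictMono x} := by
    rw [h1]
    refine isOpen_iInter_of_finite fun p => ?_
    by_cases hp : p.1 < p.2
    · simp only [hp, forall_true_left]
      exact isOpen_lt (continuous_apply _) (continuous_apply _)
    · have : {x : Fin N → ℝ | p.1 < p.2 → x p.1 < x p.2} = Set.univ := by
        ext y; simp [hp]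
      rw [this]; exact isOpen_univ
  have h2 : IsOpen {x : Fin N → ℝ | x (-1) - x 0 < Real.pi} :=
    isOpen_lt (f := fun x : Fin N → ℝ => x (-1) - x 0) ((continuous_apply (-1 : Fin N)).sub (continuous_apply (0 : Fin N))) continuous_const
  have : C2 N = {x : Fin N → ℝ | StrictMono x} ∩ {x | x (-1) - x 0 < Real.pi} := rfl
  rw [this]
  exact ‹IsOpen {x : Fin N → ℝ | StrictMono x}›.inter h2

variable {x : Fin N → ℝ}

lemma gap (hN : 2 ≤ N) (hx : x ∈ C2 N) (j : Fin N) :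
    0 < eps j * (x (j + 1) - x j) ∧ eps j * (x (j + 1) - x j) < Real.pi := by
  obtain ⟨n, rfl⟩ := Nat.exists_eq_succ_of_ne_zero (NeZero.ne N)
  have hlast : (-1 : Fin (n+1)) = Fin.last n := by
    ext; simp [Fin.coe_neg_one]
  obtain ⟨hmono, hpi⟩ := hx
  by_cases h : j + 1 = 0
  · have hj : j = -1 := by
      have := eq_neg_of_add_eq_zero_left h
      simpa using this
    subst hj
    rw [show eps (-1 : Fin (n+1)) = -1 from by rw [eps, if_pos h], neg_add_cancel]
    have h0 : (0 : Fin (n+1)) < -1 := by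
      rw [hlast]
      refine Fin.lt_last_iff_ne_last.2 ?_
      intro h0
      have : n = 0 := by simpa using congrArg Fin.val h0.symm
      omega
    have := hmono h0
    constructor <;> nlinarith [hpi]
  · have hj1 : j < j + 1 := by
      rw [Fin.lt_iff_val_lt_val]
      have hjl : j ≠ Fin.last n := fun heq => h (by rw [heq, Fin.last_add_one])
      have : (j + 1).val = j.val + 1 :=
        Fin.val_add_one_of_lt (Fin.lt_last_iff_ne_last.2 hjl)
      omega
    have hp : 0 < x (j+1) - x j := sub_pos.2 (hmono hj1)
    have hle : x (j+1) - x j ≤ x (-1) - x 0 := by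
      rw [hlast]
      have h1 : x (j+1) ≤ x (Fin.last n) := hmono.monotone (Fin.le_last _)
      have h2 : x 0 ≤ x j := hmono.monotone (Fin.zero_le _)
      linarith
    simp only [eps, if_neg h, one_mul]
    exact ⟨hp, lt_of_le_of_lt hle hpi⟩

lemma sin_eps_pos (hN : 2 ≤ N) (hx : x ∈ C2 N) (j : Fin N) :
    0 < Real.sin (eps j * (x (j + 1) - x j)) :=
  Real.sin_pos_of_pos_of_lt_pi (gap hN hx j).1 (gap hN hx j).2

lemma eps_sq (j : Fin N) : eps j * eps j = 1 := by
  unfold eps; split <;> norm_num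

lemma sin_theta_ne (hN : 2 ≤ N) (hx : x ∈ C2 N) (j : Fin N) :
    Real.sin (x (j + 1) - x j) ≠ 0 := by
  have h := (sin_eps_pos hN hx j).ne'
  unfold eps at h
  split at h
  · intro hc; apply h; rw [neg_one_mul, Real.sin_neg, hc, neg_zero]
  · simpa using h

lemma abs_eq_eps (hN : 2 ≤ N) (hx : x ∈ C2 N) (j : Fin N) :
    |x j - x (j + 1)| = eps j * (x (j + 1) - x j) := by
  have h := gap hN hx j
  have : |x j - x (j+1)| = |eps j * (x (j+1) - x j)| := by
    unfold eps; split
    · rw [abs_mul]; simp [abs_sub_comm]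
    · simp [abs_sub_comm]
  rw [this, abs_of_pos h.1]

lemma mu2_eq_muT (hN : 2 ≤ N) {a : ℝ} (hx : x ∈ C2 N) : mu2 a x = muT a x := by
  unfold mu2 muT
  exact Finset.prod_congr rfl fun j _ => by rw [abs_eq_eps hN hx j]


open Finset

variable {d : ℕ}

lemma Sop_add (i j : Fin N) (u v : Spin N d) : Sop i j (u + v) = Sop i j u + Sop i j v := rfl

lemma Sop_smul (i j : Fin N) (r : ℝ) (v : Spin N d) : Sop i j (r • v) = r • Sop i j v := rfl

lemma Sop_sum {ι : Type*} (t : Finset ι) (i j : Fin N) (f : ι → Spin N d) :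
    Sop i j (∑ k ∈ t, f k) = ∑ k ∈ t, Sop i j (f k) := by
  funext c
  simp [Sop, Finset.sum_apply]

lemma Sop_sComp (i j k : Fin N) (s : Spin N d) :
    Sop i j (sComp s k) = sComp s (Equiv.swap i j k) := by
  funext c
  unfold sComp Sop spinPerm
  simp only [Pi.smul_apply, Finset.sum_apply, smul_eq_mul]
  congr 1
  refine Finset.sum_nbij' (fun pp => Equiv.swap i j * pp) (fun pp => Equiv.swap i j * pp)
    ?_ ?_ ?_ ?_ ?_
  · intro pp hpp
    simp only [Finset.mem_filter, Finset.mem_univ, true_and] at hpp ⊢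
    simp [Equiv.Perm.mul_apply, hpp]
  · intro pp hpp
    simp only [Finset.mem_filter, Finset.mem_univ, true_and] at hpp ⊢
    rw [Equiv.Perm.mul_apply, hpp, Equiv.swap_apply_self]
  · intro pp _; simp [mul_assoc, ← Equiv.swap_mul_self i j]
  · intro pp _; simp [mul_assoc, ← Equiv.swap_mul_self i j]
  · intro pp _
    congr 1



/-! ### Partial derivative machinery -/

def HasPd (i : Fin N) (f : (Fin N → ℝ) → ℝ) (x : Fin N → ℝ) (v : ℝ) : Prop :=
  ∃ D : (Fin N → ℝ) →L[ℝ] ℝ, HasFDerivAt f D x ∧ D (Pi.single i 1) = v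

variable {i : Fin N} {f g : (Fin N → ℝ) → ℝ} {v w : ℝ}

lemma HasPd.pd_eq (h : HasPd i f x v) : pd i f x = v := by
  obtain ⟨D, hD, hv⟩ := h
  rw [pd, hD.fderiv]; exact hv

lemma HasPd.congr_value (h : HasPd i f x v) (hvw : v = w) : HasPd i f x w := hvw ▸ h

lemma hasPd_const (c : ℝ) : HasPd i (fun _ => c) x 0 :=
  ⟨0, hasFDerivAt_const c x, rfl⟩

lemma hasPd_coord (p : Fin N) : HasPd i (fun y => y p) x (if p = i then 1 else 0) := by
  refine ⟨ContinuousLinearMap.proj p, ?_, ?_⟩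
  · exact (ContinuousLinearMap.proj p : (Fin N → ℝ) →L[ℝ] ℝ).hasFDerivAt
  · simp [Pi.single_apply]

lemma HasPd.add (hf : HasPd i f x v) (hg : HasPd i g x w) :
    HasPd i (fun y => f y + g y) x (v + w) := by
  obtain ⟨D, hD, hv⟩ := hf; obtain ⟨E, hE, hw⟩ := hg
  exact ⟨D + E, hD.add hE, by simp [hv, hw]⟩

lemma HasPd.sub (hf : HasPd i f x v) (hg : HasPd i g x w) :
    HasPd i (fun y => f y - g y) x (v - w) := by
  obtain ⟨D, hD, hv⟩ := hf; obtain ⟨E, hE, hw⟩ := hg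
  exact ⟨D - E, hD.sub hE, by simp [hv, hw]⟩

lemma HasPd.neg (hf : HasPd i f x v) : HasPd i (fun y => -f y) x (-v) := by
  obtain ⟨D, hD, hv⟩ := hf
  exact ⟨-D, hD.neg, by simp [hv]⟩

lemma HasPd.mul (hf : HasPd i f x v) (hg : HasPd i g x w) :
    HasPd i (fun y => f y * g y) x (f x * w + g x * v) := by
  obtain ⟨D, hD, hv⟩ := hf; obtain ⟨E, hE, hw⟩ := hg
  exact ⟨f x • E + g x • D, hD.mul hE, by simp [hv, hw]⟩

lemma HasPd.const_mul (hf : HasPd i f x v) (c : ℝ) :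
    HasPd i (fun y => c * f y) x (c * v) := by
  simpa using (hasPd_const (i := i) (x := x) c).mul hf

lemma HasPd.comp1 {G : ℝ → ℝ} {G' : ℝ} (hG : HasDerivAt G G' (f x)) (hf : HasPd i f x v) :
    HasPd i (fun y => G (f y)) x (G' * v) := by
  obtain ⟨D, hD, hv⟩ := hf
  exact ⟨G' • D, hG.comp_hasFDerivAt x hD, by simp [hv]⟩

lemma hasPd_sum {ι : Type*} [Fintype ι] {F : ι → (Fin N → ℝ) → ℝ} {V : ι → ℝ}
    (h : ∀ j, HasPd i (F j) x (V j)) :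
    HasPd i (fun y => ∑ j, F j y) x (∑ j, V j) := by
  choose D hD hV using h
  exact ⟨∑ j, D j, HasFDerivAt.fun_sum fun j _ => hD j, by simp [hV]⟩

lemma hasPd_prod {F : Fin N → (Fin N → ℝ) → ℝ} {V : Fin N → ℝ}
    (h : ∀ j, HasPd i (F j) x (V j)) :
    HasPd i (fun y => ∏ j, F j y) x (∑ j, (∏ l ∈ Finset.univ.erase j, F l x) * V j) := by
  choose D hD hV using h
  refine ⟨∑ j, (∏ l ∈ Finset.univ.erase j, F l x) • D j, ?_, ?_⟩
  · exact HasFDerivAt.finset_prod fun j _ => hD j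
  · simp [hV]

lemma hasDerivAt_cot {u : ℝ} (h : Real.sin u ≠ 0) :
    HasDerivAt (fun t => Real.cos t / Real.sin t) (-((Real.sin u) ^ 2)⁻¹) u := by
  have h1 := (Real.hasDerivAt_cos u).div (Real.hasDerivAt_sin u) h
  refine h1.congr_deriv ?_
  have h2 : Real.sin u ^ 2 + Real.cos u ^ 2 = 1 := Real.sin_sq_add_cos_sq u
  rw [show -Real.sin u * Real.sin u - Real.cos u * Real.cos u = -1 by nlinarith]
  field_simp

lemma hasPd_ct (p q : Fin N) (h : Real.sin (x p - x q) ≠ 0) :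
    HasPd i (fun y => Real.cos (y p - y q) / Real.sin (y p - y q)) x
      (-((Real.sin (x p - x q)) ^ 2)⁻¹ *
        ((if p = i then (1:ℝ) else 0) - (if q = i then 1 else 0))) :=
  HasPd.comp1 (G := fun t => Real.cos t / Real.sin t)
    (f := fun y => y p - y q) (hasDerivAt_cot h) ((hasPd_coord p).sub (hasPd_coord q))


/-! ### The concrete functions -/

def ct (u : ℝ) : ℝ := Real.cos u / Real.sin u

lemma ct_neg (u : ℝ) : ct (-u) = -ct u := by
  unfold ct; rw [Real.cos_neg, Real.sin_neg, div_neg]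

def A (k : Fin N) (x : Fin N → ℝ) : ℝ := 2 * (x k - xbar x)

def B (i : Fin N) (x : Fin N → ℝ) : ℝ := ct (x i - x (i - 1)) + ct (x i - x (i + 1))

def Bd (i : Fin N) (x : Fin N → ℝ) : ℝ :=
  -((Real.sin (x i - x (i - 1))) ^ 2)⁻¹ - ((Real.sin (x i - x (i + 1))) ^ 2)⁻¹

def ee (i k : Fin N) : ℝ := (if k = i then 1 else 0) - (N : ℝ)⁻¹

def F0 (a : ℝ) (G : ℝ → ℝ) (k : Fin N) (x : Fin N → ℝ) : ℝ := muT a x * G (A k x)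

def F1 (a : ℝ) (G G' : ℝ → ℝ) (k i : Fin N) (x : Fin N → ℝ) : ℝ :=
  muT a x * (a * B i x * G (A k x) + G' (A k x) * (2 * ee i k))

def F2 (a : ℝ) (G G' : ℝ → ℝ) (k i : Fin N) (x : Fin N → ℝ) : ℝ :=
  muT a x * (a * B i x * (a * B i x * G (A k x) + G' (A k x) * (2 * ee i k))
    + a * Bd i x * G (A k x) + a * B i x * (G' (A k x) * (2 * ee i k))
    - G (A k x) * (2 * ee i k) ^ 2)

variable {a : ℝ} {G G' : ℝ → ℝ} {k : Fin N}

lemma HasPd.mul_const (hf : HasPd i f x v) (c : ℝ) :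
    HasPd i (fun y => f y * c) x (v * c) := by
  have := hf.mul (hasPd_const (i := i) (x := x) c)
  simpa [mul_comm] using this

lemma HasPd.div_const (hf : HasPd i f x v) (c : ℝ) :
    HasPd i (fun y => f y / c) x (v / c) := by
  simpa [div_eq_mul_inv] using hf.mul_const c⁻¹

lemma hasPd_xbar : HasPd i xbar x (N : ℝ)⁻¹ := by
  have h1 : HasPd i (fun y : Fin N → ℝ => ∑ j, y j) x (∑ j : Fin N, if j = i then 1 else 0) :=
    hasPd_sum fun j => hasPd_coord j
  have h2 := h1.div_const (N : ℝ)
  have h3 : (∑ j : Fin N, if j = i then (1:ℝ) else 0) = 1 := by simp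
  rw [h3] at h2
  refine (h2.congr_value ?_)
  rw [one_div]

lemma hasPd_A : HasPd i (A k) x (2 * ee i k) := by
  have h := ((hasPd_coord (i := i) (x := x) k).sub hasPd_xbar).const_mul 2
  exact h.congr_value (by unfold ee; ring)

/-- `i - 1 ≠ i` in `Fin N` for `N ≥ 2`. -/
lemma sub_one_ne (hN : 2 ≤ N) (i : Fin N) : i - 1 ≠ i := by
  intro h
  have := congrArg (· + 1) h
  simp at this
  omega

lemma add_one_ne (hN : 2 ≤ N) (i : Fin N) : i + 1 ≠ i := by
  intro h
  exact sub_one_ne hN (i + 1) (by rw [add_sub_cancel_right, h])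

lemma sin_m_ne (hN : 2 ≤ N) (hx : x ∈ C2 N) (i : Fin N) :
    Real.sin (x i - x (i - 1)) ≠ 0 := by
  have h := sin_theta_ne hN hx (i - 1)
  rwa [sub_add_cancel] at h

lemma sin_p_ne (hN : 2 ≤ N) (hx : x ∈ C2 N) (i : Fin N) :
    Real.sin (x i - x (i + 1)) ≠ 0 := by
  have h := sin_theta_ne hN hx i
  intro hc; apply h
  rw [show x (i+1) - x i = -(x i - x (i+1)) by ring, Real.sin_neg, hc, neg_zero]

lemma hasPd_B (hN : 2 ≤ N) (hx : x ∈ C2 N) : HasPd i (B i) x (Bd i x) := by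
  have hm := hasPd_ct (i := i) i (i - 1) (sin_m_ne hN hx i)
  have hp := hasPd_ct (i := i) i (i + 1) (sin_p_ne hN hx i)
  have h := hm.add hp
  unfold B ct Bd
  refine h.congr_value ?_
  rw [if_pos rfl, if_neg (sub_one_ne hN i), if_neg (add_one_ne hN i)]
  ring

/-- Derivative of a single factor of `muT`. -/
lemma hasPd_fac (hN : 2 ≤ N) (hx : x ∈ C2 N) (j : Fin N) :
    HasPd i (fun y => Real.sin (eps j * (y (j + 1) - y j)) ^ a) x
      (a * Real.sin (eps j * (x (j + 1) - x j)) ^ (a - 1) *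
        (Real.cos (eps j * (x (j + 1) - x j)) *
          (eps j * ((if j + 1 = i then 1 else 0) - (if j = i then 1 else 0))))) := by
  have h1 : HasPd i (fun y : Fin N → ℝ => eps j * (y (j + 1) - y j)) x
      (eps j * ((if j + 1 = i then 1 else 0) - (if j = i then 1 else 0))) :=
    ((hasPd_coord (j + 1)).sub (hasPd_coord j)).const_mul (eps j)
  have h2 := HasPd.comp1 (Real.hasDerivAt_sin (eps j * (x (j + 1) - x j))) h1
  have h3 := HasPd.comp1
    (Real.hasDerivAt_rpow_const (x := Real.sin (eps j * (x (j + 1) - x j))) (p := a)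
      (Or.inl (sin_eps_pos hN hx j).ne')) h2
  exact h3.congr_value (by ring)

lemma eps_ct (j : Fin N) (t : ℝ) :
    eps j * (Real.cos (eps j * t) / Real.sin (eps j * t)) = Real.cos t / Real.sin t := by
  unfold eps
  split
  · rw [neg_one_mul, neg_one_mul, Real.cos_neg, Real.sin_neg, div_neg, neg_neg]
  · rw [one_mul, one_mul]

lemma hasPd_muT (hN : 2 ≤ N) (hx : x ∈ C2 N) :
    HasPd i (muT a) x (muT a x * (a * B i x)) := by
  have h := hasPd_prod (i := i) (fun j => hasPd_fac (a := a) hN hx j)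
  have h2 : HasPd i (muT a) x
      (∑ j : Fin N, (∏ l ∈ Finset.univ.erase j, Real.sin (eps l * (x (l + 1) - x l)) ^ a) *
        (a * Real.sin (eps j * (x (j + 1) - x j)) ^ (a - 1) *
          (Real.cos (eps j * (x (j + 1) - x j)) *
            (eps j * ((if j + 1 = i then 1 else 0) - (if j = i then 1 else 0)))))) := by
    obtain ⟨D, hD, hval⟩ := h
    exact ⟨D, by unfold muT; exact hD, hval⟩
  refine h2.congr_value ?_
  have key : ∀ j : Fin N,
      (∏ l ∈ Finset.univ.erase j, Real.sin (eps l * (x (l + 1) - x l)) ^ a) *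
        (a * Real.sin (eps j * (x (j + 1) - x j)) ^ (a - 1) *
          (Real.cos (eps j * (x (j + 1) - x j)) *
            (eps j * ((if j + 1 = i then 1 else 0) - (if j = i then 1 else 0))))) =
      muT a x * (a * ct (x (j + 1) - x j) *
        ((if j + 1 = i then 1 else 0) - (if j = i then 1 else 0))) := by
    intro j
    have hsj := sin_eps_pos hN hx j
    have hprod : (∏ l ∈ Finset.univ.erase j, Real.sin (eps l * (x (l + 1) - x l)) ^ a) *
        Real.sin (eps j * (x (j + 1) - x j)) ^ a = muT a x :=
      Finset.prod_erase_mul _ _ (Finset.mem_univ j)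
    rw [Real.rpow_sub_one hsj.ne' a]
    unfold ct
    rw [← eps_ct j (x (j + 1) - x j)]
    field_simp
    rw [← hprod]
    ring
  rw [Finset.sum_congr rfl (fun j _ => key j)]
  have split : ∀ j : Fin N,
      muT a x * (a * ct (x (j + 1) - x j) *
        ((if j + 1 = i then 1 else 0) - (if j = i then 1 else 0))) =
      (if j = i - 1 then muT a x * (a * ct (x (j + 1) - x j)) else 0)
        - (if j = i then muT a x * (a * ct (x (j + 1) - x j)) else 0) := by
    intro j
    have hiff : (j + 1 = i) ↔ (j = i - 1) := by
      constructor
      · intro h; rw [← h]; rw [add_sub_cancel_right]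
      · intro h; rw [h]; rw [sub_add_cancel]
    by_cases h1 : j = i - 1 <;> by_cases h2 : j = i <;>
      simp [h1, h2, hiff, mul_comm] <;> ring_nf <;> simp [hiff.symm, h1, h2] <;> ring
    all_goals simp [show N ≠ 1 by omega, (sub_one_ne hN i).symm]
  rw [Finset.sum_congr rfl (fun j _ => split j), Finset.sum_sub_distrib,
    Finset.sum_ite_eq' Finset.univ (i - 1), Finset.sum_ite_eq' Finset.univ i]
  simp only [Finset.mem_univ, if_true, sub_add_cancel]
  unfold B
  have : ct (x (i + 1) - x i) = -ct (x i - x (i + 1)) := by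
    rw [show x (i + 1) - x i = -(x i - x (i + 1)) by ring, ct_neg]
  rw [this]
  ring


lemma hasPd_F0 (hN : 2 ≤ N) (hx : x ∈ C2 N) (hG : ∀ u, HasDerivAt G (G' u) u) :
    HasPd i (F0 a G k) x (F1 a G G' k i x) := by
  have hA := hasPd_A (i := i) (k := k) (x := x)
  have hGA := HasPd.comp1 (hG (A k x)) hA
  have h := (hasPd_muT (a := a) hN hx).mul hGA
  exact h.congr_value (by unfold F1; ring)

lemma hasPd_F1 (hN : 2 ≤ N) (hx : x ∈ C2 N) (hG : ∀ u, HasDerivAt G (G' u) u)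
    (hG2 : ∀ u, HasDerivAt G' (-G u) u) :
    HasPd i (F1 a G G' k i) x (F2 a G G' k i x) := by
  have hA := hasPd_A (i := i) (k := k) (x := x)
  have hGA := HasPd.comp1 (hG (A k x)) hA
  have hG'A := HasPd.comp1 (hG2 (A k x)) hA
  have hB := hasPd_B (i := i) hN hx
  have h1 := (hB.const_mul a).mul hGA
  have h2 := hG'A.mul_const (2 * ee i k)
  have h := (hasPd_muT (a := a) hN hx).mul (h1.add h2)
  exact h.congr_value (by unfold F2; ring)

variable {d : ℕ}

lemma pdVec {F : Fin N → (Fin N → ℝ) → ℝ} {V : Fin N → ℝ} {w : Fin N → Spin N d}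
    (hf : ∀ k, HasPd i (F k) x (V k)) :
    ∃ D : (Fin N → ℝ) →L[ℝ] Spin N d,
      HasFDerivAt (fun y => ∑ k, F k y • w k) D x ∧
        D (Pi.single i 1) = ∑ k, V k • w k := by
  choose D hD hv using hf
  refine ⟨∑ k, (D k).smulRight (w k), HasFDerivAt.fun_sum fun k _ => (hD k).smul_const (w k), ?_⟩
  simp [hv]

/-- The wavefunction, in gauge-friendly form. -/
def PsiT (a : ℝ) (G : ℝ → ℝ) (s : Spin N d) : (Fin N → ℝ) → Spin N d :=
  fun y => ∑ k, F0 a G k y • sComp s k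

lemma psi_eq (hN : 2 ≤ N) {y : Fin N → ℝ} (hy : y ∈ C2 N) (s : Spin N d) :
    mu2 a y • ∑ k, G (A k y) • sComp s k = PsiT a G s y := by
  rw [mu2_eq_muT hN hy, PsiT, Finset.smul_sum]
  exact Finset.sum_congr rfl fun k _ => by rw [smul_smul]; rfl

lemma pd_psi (hN : 2 ≤ N) {y : Fin N → ℝ} (hy : y ∈ C2 N) (s : Spin N d)
    (hG : ∀ u, HasDerivAt G (G' u) u) :
    pd i (fun z => mu2 a z • ∑ k, G (A k z) • sComp s k) y =
      ∑ k, F1 a G G' k i y • sComp s k := by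
  obtain ⟨D, hD, hval⟩ := pdVec (i := i) (w := fun k => sComp s k)
    (fun k => hasPd_F0 (a := a) (k := k) hN hy hG)
  have hEq : (fun z => mu2 a z • ∑ k, G (A k z) • sComp s k) =ᶠ[nhds y] PsiT a G s :=
    Filter.eventuallyEq_of_mem (C2_open.mem_nhds hy) (fun z hz => psi_eq hN hz s)
  rw [pd, hEq.fderiv_eq]
  rw [show fderiv ℝ (PsiT a G s) y = D from hD.fderiv]
  exact hval

lemma pd2_psi (hN : 2 ≤ N) (hx : x ∈ C2 N) (s : Spin N d)
    (hG : ∀ u, HasDerivAt G (G' u) u) (hG2 : ∀ u, HasDerivAt G' (-G u) u) :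
    pd i (pd i (fun z => mu2 a z • ∑ k, G (A k z) • sComp s k)) x =
      ∑ k, F2 a G G' k i x • sComp s k := by
  obtain ⟨D, hD, hval⟩ := pdVec (i := i) (w := fun k => sComp s k)
    (fun k => hasPd_F1 (a := a) (k := k) hN hx hG hG2)
  have hEq : pd i (fun z => mu2 a z • ∑ k, G (A k z) • sComp s k) =ᶠ[nhds x]
      (fun y => ∑ k, F1 a G G' k i y • sComp s k) :=
    Filter.eventuallyEq_of_mem (C2_open.mem_nhds hx) (fun z hz => pd_psi hN hz s hG)
  rw [pd, hEq.fderiv_eq]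
  rw [show fderiv ℝ (fun y => ∑ k, F1 a G G' k i y • sComp s k) x = D from hD.fderiv]
  exact hval


/-! ### Summation identities -/

lemma sum_shift (g : Fin N → ℝ) : ∑ i, g (i + 1) = ∑ i, g i :=
  Equiv.sum_comp (Equiv.addRight (1 : Fin N)) g

lemma sum_mul_ee (g : Fin N → ℝ) (k : Fin N) :
    ∑ i, g i * ee i k = g k - (∑ i, g i) * (N : ℝ)⁻¹ := by
  unfold ee
  simp only [mul_sub]
  rw [Finset.sum_sub_distrib]
  congr 1
  · have : ∀ i : Fin N, g i * (if k = i then (1:ℝ) else 0) = if k = i then g i else 0 := by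
      intro i; by_cases h : k = i <;> simp [h]
    rw [Finset.sum_congr rfl fun i _ => this i, Finset.sum_ite_eq]
    simp
  · rw [← Finset.sum_mul]

lemma sum_ee_sq (k : Fin N) : ∑ i, (ee i k) ^ 2 = 1 - (N : ℝ)⁻¹ := by
  have hN0 : (N : ℝ) ≠ 0 := Nat.cast_ne_zero.2 (NeZero.ne N)
  have key : ∀ i : Fin N, (ee i k) ^ 2 =
      (if k = i then (1:ℝ) else 0) * (1 - 2 * (N : ℝ)⁻¹) + ((N : ℝ)⁻¹) ^ 2 := by
    intro i; unfold ee; by_cases h : k = i <;> simp [h] <;> ring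
  rw [Finset.sum_congr rfl fun i _ => key i, Finset.sum_add_distrib, ← Finset.sum_mul,
    Finset.sum_ite_eq]
  simp only [Finset.mem_univ, if_true, Finset.sum_const, Finset.card_univ, Fintype.card_fin,
    nsmul_eq_mul, one_mul]
  field_simp
  ring

lemma sum_ct_m : ∑ i, ct (x i - x (i - 1)) = -∑ i, ct (x i - x (i + 1)) := by
  rw [← sum_shift (fun i => ct (x i - x (i - 1)))]
  rw [← Finset.sum_neg_distrib]
  refine Finset.sum_congr rfl fun i _ => ?_
  rw [add_sub_cancel_right, show x (i + 1) - x i = -(x i - x (i + 1)) by ring, ct_neg]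

lemma sum_ct_sq_m : ∑ i, ct (x i - x (i - 1)) ^ 2 = ∑ i, ct (x i - x (i + 1)) ^ 2 := by
  rw [← sum_shift (fun i => ct (x i - x (i - 1)) ^ 2)]
  refine Finset.sum_congr rfl fun i _ => ?_
  rw [add_sub_cancel_right, show x (i + 1) - x i = -(x i - x (i + 1)) by ring, ct_neg, neg_sq]

lemma sum_inv_m :
    ∑ i, ((Real.sin (x i - x (i - 1))) ^ 2)⁻¹ = ∑ i, ((Real.sin (x i - x (i + 1))) ^ 2)⁻¹ := by
  rw [← sum_shift (fun i => ((Real.sin (x i - x (i - 1))) ^ 2)⁻¹)]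
  refine Finset.sum_congr rfl fun i _ => ?_
  rw [add_sub_cancel_right, show x (i + 1) - x i = -(x i - x (i + 1)) by ring, Real.sin_neg,
    neg_sq]

lemma sum_csc_sub_ct (hN : 2 ≤ N) (hx : x ∈ C2 N) :
    ∑ i, (((Real.sin (x i - x (i + 1))) ^ 2)⁻¹ - ct (x i - x (i + 1)) ^ 2) = N := by
  have key : ∀ i : Fin N,
      ((Real.sin (x i - x (i + 1))) ^ 2)⁻¹ - ct (x i - x (i + 1)) ^ 2 = 1 := by
    intro i
    have hs := sin_p_ne hN hx i
    unfold ct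
    rw [div_pow]
    field_simp
    nlinarith [Real.sin_sq_add_cos_sq (x i - x (i + 1))]
  rw [Finset.sum_congr rfl fun i _ => key i]
  simp


/-! ### Key trig identities -/

lemma hI_cos (t u : ℝ) : Real.cos t - Real.cos (t - 2*u) =
    2 * Real.cos t * Real.sin u ^ 2 + 2 * (-Real.sin t) * Real.sin u * Real.cos u := by
  rw [Real.cos_sub, Real.cos_two_mul, Real.sin_two_mul]
  linear_combination (-2 * Real.cos t) * (Real.sin_sq_add_cos_sq u)

lemma hI_sin (t u : ℝ) : Real.sin t - Real.sin (t - 2*u) =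
    2 * Real.sin t * Real.sin u ^ 2 + 2 * Real.cos t * Real.sin u * Real.cos u := by
  rw [Real.sin_sub, Real.cos_two_mul, Real.sin_two_mul]
  linear_combination (-2 * Real.sin t) * (Real.sin_sq_add_cos_sq u)

/-! ### exchange sum -/

lemma exch_sum (hN : 2 ≤ N) (c g : Fin N → ℝ) (k : Fin N) :
    ∑ i, c i * g (Equiv.swap i (i + 1) k) =
      (∑ i, c i) * g k + c k * (g (k + 1) - g k) + c (k - 1) * (g (k - 1) - g k) := by
  have hsplit : ∀ i : Fin N, c i * g (Equiv.swap i (i + 1) k) =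
      c i * g k + c i * (g (Equiv.swap i (i + 1) k) - g k) := fun i => by ring
  rw [Finset.sum_congr rfl fun i _ => hsplit i, Finset.sum_add_distrib, ← Finset.sum_mul]
  have hzero : ∀ i ∈ Finset.univ, i ∉ ({k - 1, k} : Finset (Fin N)) →
      c i * (g (Equiv.swap i (i + 1) k) - g k) = 0 := by
    intro i _ hi
    simp only [Finset.mem_insert, Finset.mem_singleton] at hi
    push_neg at hi
    have h1 : k ≠ i := fun h => hi.2 h.symm
    have h2 : k ≠ i + 1 := fun h => hi.1 (eq_sub_of_add_eq h.symm)
    rw [Equiv.swap_apply_of_ne_of_ne h1 h2, sub_self, mul_zero]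
  rw [← Finset.sum_subset (Finset.subset_univ ({k - 1, k} : Finset (Fin N))) hzero]
  rw [Finset.sum_pair (sub_one_ne hN k)]
  rw [show Equiv.swap (k - 1) (k - 1 + 1) k = k - 1 by
    rw [sub_add_cancel]; exact Equiv.swap_apply_right _ _]
  rw [Equiv.swap_apply_left]
  ring

/-! ### the master scalar identity -/

lemma master (hN : 2 ≤ N) (hx : x ∈ C2 N) {a : ℝ} (k : Fin N)
    (hI : ∀ t u : ℝ, G t - G (t - 2*u) =
      2 * G t * Real.sin u ^ 2 + 2 * G' t * Real.sin u * Real.cos u) :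
    -(∑ i, F2 a G G' k i x)
      + (2*a^2 * ∑ i, ct (x i - x (i - 1)) * ct (x i - x (i + 1))) * F0 a G k x
      + 2*a * (∑ i, ((Real.sin (x i - x (i + 1)))^2)⁻¹ *
          (a * F0 a G k x - F0 a G (Equiv.swap i (i + 1) k) x))
      = (2*N*a^2 + 4*(2*a + 1 - 1/N)) * F0 a G k x := by
  have hN0 : (N : ℝ) ≠ 0 := Nat.cast_ne_zero.2 (NeZero.ne N)
  set μ := muT a x with hμ
  set Gk := G (A k x) with hGk
  set G'k := G' (A k x) with hG'k
  set P := ∑ i, ct (x i - x (i + 1)) ^ 2 with hP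
  set Q := ∑ i, ct (x i - x (i - 1)) * ct (x i - x (i + 1)) with hQ
  set R := ∑ i, ((Real.sin (x i - x (i + 1))) ^ 2)⁻¹ with hR
  -- second derivative sum
  have hB2 : ∑ i, (B i x) ^ 2 = 2*P + 2*Q := by
    have h : ∀ i : Fin N, (B i x) ^ 2 = ct (x i - x (i - 1)) ^ 2
        + 2*(ct (x i - x (i - 1)) * ct (x i - x (i + 1))) + ct (x i - x (i + 1)) ^ 2 :=
      fun i => by unfold B; ring
    rw [Finset.sum_congr rfl fun i _ => h i, Finset.sum_add_distrib, Finset.sum_add_distrib,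
      sum_ct_sq_m, ← Finset.mul_sum]
    rw [← hP, ← hQ]; ring
  have hBee : ∑ i, B i x * ee i k = B k x := by
    rw [sum_mul_ee (fun i => B i x) k]
    have h0 : ∑ i, B i x = 0 := by
      have h : ∀ i : Fin N, B i x = ct (x i - x (i - 1)) + ct (x i - x (i + 1)) := fun i => rfl
      rw [Finset.sum_congr rfl fun i _ => h i, Finset.sum_add_distrib, sum_ct_m]
      ring
    rw [h0]; ring
  have hBd : ∑ i, Bd i x = -2*R := by
    have h : ∀ i : Fin N, Bd i x =
        -((Real.sin (x i - x (i - 1)) ^ 2)⁻¹) - (Real.sin (x i - x (i + 1)) ^ 2)⁻¹ :=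
      fun i => rfl
    rw [Finset.sum_congr rfl fun i _ => h i, Finset.sum_sub_distrib, Finset.sum_neg_distrib,
      sum_inv_m, ← hR]
    ring
  have hsum2 : ∑ i, F2 a G G' k i x =
      μ*(a^2*Gk) * (2*P + 2*Q) + μ*(4*a*G'k) * (B k x) + μ*(a*Gk) * (-2*R)
        - 4*μ*Gk * (1 - (N:ℝ)⁻¹) := by
    have hstep : ∀ i : Fin N, F2 a G G' k i x =
        (μ*(a^2*Gk)) * (B i x)^2 + (μ*(4*a*G'k)) * (B i x * ee i k)
          + (μ*(a*Gk)) * Bd i x - (4*μ*Gk) * (ee i k)^2 := fun i => by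
      rw [hμ, hGk, hG'k]; unfold F2; ring
    rw [Finset.sum_congr rfl fun i _ => hstep i, Finset.sum_sub_distrib,
      Finset.sum_add_distrib, Finset.sum_add_distrib,
      ← Finset.mul_sum, ← Finset.mul_sum, ← Finset.mul_sum, ← Finset.mul_sum,
      hB2, hBee, hBd, sum_ee_sq]
  -- exchange sum
  have hexch : ∑ i, ((Real.sin (x i - x (i + 1)))^2)⁻¹ *
      (a * F0 a G k x - F0 a G (Equiv.swap i (i + 1) k) x) =
      a * R * F0 a G k x - (R * F0 a G k x
        + ((Real.sin (x k - x (k + 1)))^2)⁻¹ * (F0 a G (k + 1) x - F0 a G k x)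
        + ((Real.sin (x (k - 1) - x k))^2)⁻¹ * (F0 a G (k - 1) x - F0 a G k x)) := by
    have h : ∀ i : Fin N, ((Real.sin (x i - x (i + 1)))^2)⁻¹ *
        (a * F0 a G k x - F0 a G (Equiv.swap i (i + 1) k) x) =
        (a * F0 a G k x) * ((Real.sin (x i - x (i + 1)))^2)⁻¹
          - ((Real.sin (x i - x (i + 1)))^2)⁻¹ * F0 a G (Equiv.swap i (i + 1) k) x :=
      fun i => by ring
    rw [Finset.sum_congr rfl fun i _ => h i, Finset.sum_sub_distrib, ← Finset.mul_sum, ← hR,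
      exch_sum hN (fun i => ((Real.sin (x i - x (i + 1)))^2)⁻¹) (fun j => F0 a G j x) k]
    simp only [sub_add_cancel]
    ring
  -- the two local trig identities
  have hA1 : A (k + 1) x = A k x - 2*(x k - x (k + 1)) := by unfold A xbar; ring
  have hA2 : A (k - 1) x = A k x - 2*(x k - x (k - 1)) := by unfold A xbar; ring
  have e1 : ((Real.sin (x k - x (k + 1)))^2)⁻¹ * (F0 a G k x - F0 a G (k + 1) x) =
      μ * (2*Gk + 2*G'k * ct (x k - x (k + 1))) := by
    have hs := sin_p_ne hN hx k
    unfold F0 ct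
    rw [hA1, ← hμ, ← hGk, show μ * Gk - μ * G (A k x - 2*(x k - x (k + 1))) =
      μ * (G (A k x) - G (A k x - 2*(x k - x (k + 1)))) from by rw [hGk]; ring,
      hI (A k x) (x k - x (k + 1)), ← hGk, ← hG'k]
    field_simp
  have e2 : ((Real.sin (x (k - 1) - x k))^2)⁻¹ * (F0 a G k x - F0 a G (k - 1) x) =
      μ * (2*Gk + 2*G'k * ct (x k - x (k - 1))) := by
    have hs := sin_m_ne hN hx k
    rw [show x (k - 1) - x k = -(x k - x (k - 1)) from by ring, Real.sin_neg, neg_sq]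
    unfold F0 ct
    rw [hA2, ← hμ, ← hGk, show μ * Gk - μ * G (A k x - 2*(x k - x (k - 1))) =
      μ * (G (A k x) - G (A k x - 2*(x k - x (k - 1)))) from by rw [hGk]; ring,
      hI (A k x) (x k - x (k - 1)), ← hGk, ← hG'k]
    field_simp
  -- algebraic relation between P and R
  have hPR : R = P + N := by
    have := sum_csc_sub_ct hN hx
    rw [Finset.sum_sub_distrib, ← hR, ← hP] at this
    linarith
  -- assemble
  rw [hsum2, hexch]
  have hBk : B k x = ct (x k - x (k - 1)) + ct (x k - x (k + 1)) := rfl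
  have hF0 : F0 a G k x = μ * Gk := rfl
  rw [hBk, hF0]
  linear_combination (2*a) * e1 + (2*a) * e2 + (2*a^2*μ*Gk) * hPR
    - (2*a*(((Real.sin (x k - x (k + 1)))^2)⁻¹ + ((Real.sin (x (k - 1) - x k))^2)⁻¹)) * hF0


/-! ### Main assembly -/

lemma main_eig {d : ℕ} (hN : 3 ≤ N) (hx : x ∈ C2 N) (a : ℝ) (s : Spin N d)
    (hG : ∀ u, HasDerivAt G (G' u) u) (hG2 : ∀ u, HasDerivAt G' (-G u) u)
    (hI : ∀ t u : ℝ, G t - G (t - 2*u) =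
      2 * G t * Real.sin u ^ 2 + 2 * G' t * Real.sin u * Real.cos u) :
    H2 a (fun y => mu2 a y • ∑ k, G (A k y) • sComp s k) x =
      (2*(N:ℝ)*a^2 + 4*(2*a + 1 - 1/(N:ℝ))) • (mu2 a x • ∑ k, G (A k x) • sComp s k) := by
  have hN2 : 2 ≤ N := by omega
  have hPsix : (mu2 a x • ∑ k, G (A k x) • sComp s k) = ∑ k, F0 a G k x • sComp s k :=
    psi_eq hN2 hx s
  rw [H2, hPsix]
  -- second derivative term
  have hT1 : ∑ i : Fin N, pd i (pd i (fun y => mu2 a y • ∑ k, G (A k y) • sComp s k)) x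
      = ∑ k, (∑ i, F2 a G G' k i x) • sComp s k := by
    rw [Finset.sum_congr rfl fun i (_ : i ∈ Finset.univ) => pd2_psi hN2 hx s hG hG2,
      Finset.sum_comm]
    exact Finset.sum_congr rfl fun k _ => (Finset.sum_smul).symm
  rw [hT1]
  -- potential term
  have hT2 : (2 * a ^ 2 * ∑ i : Fin N,
        (Real.cos (x i - x (i - 1)) / Real.sin (x i - x (i - 1))) *
          (Real.cos (x i - x (i + 1)) / Real.sin (x i - x (i + 1)))) •
        (∑ k, F0 a G k x • sComp s k)
      = ∑ k, ((2 * a ^ 2 * ∑ i, ct (x i - x (i - 1)) * ct (x i - x (i + 1))) * F0 a G k x) •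
          sComp s k := by
    rw [Finset.smul_sum]
    exact Finset.sum_congr rfl fun k _ => by rw [smul_smul]; rfl
  rw [hT2]
  -- exchange term
  have hT3 : ((2 * a) • ∑ i : Fin N,
        ((Real.sin (x i - x (i + 1))) ^ 2)⁻¹ •
          (a • (∑ k, F0 a G k x • sComp s k) -
            Sop i (i + 1) (∑ k, F0 a G k x • sComp s k)))
      = ∑ k, (2 * a * (∑ i, ((Real.sin (x i - x (i + 1))) ^ 2)⁻¹ *
          (a * F0 a G k x - F0 a G (Equiv.swap i (i + 1) k) x))) • sComp s k := by
    have hinner : ∀ i : Fin N,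
        ((Real.sin (x i - x (i + 1))) ^ 2)⁻¹ •
          (a • (∑ k, F0 a G k x • sComp s k) - Sop i (i + 1) (∑ k, F0 a G k x • sComp s k))
        = ∑ k, (((Real.sin (x i - x (i + 1))) ^ 2)⁻¹ *
            (a * F0 a G k x - F0 a G (Equiv.swap i (i + 1) k) x)) • sComp s k := by
      intro i
      have hSop : Sop i (i + 1) (∑ k, F0 a G k x • sComp s k)
          = ∑ k, F0 a G (Equiv.swap i (i + 1) k) x • sComp s k := by
        rw [Sop_sum]
        have hswap : ∑ k, Sop i (i + 1) (F0 a G k x • sComp s k)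
            = ∑ k, F0 a G k x • sComp s (Equiv.swap i (i + 1) k) :=
          Finset.sum_congr rfl fun k _ => by rw [Sop_smul, Sop_sComp]
        rw [hswap]
        have := Equiv.sum_comp (Equiv.swap i (i + 1))
          (fun m => F0 a G (Equiv.swap i (i + 1) m) x • sComp s m)
        simp only [Equiv.swap_apply_self] at this
        exact this
      rw [hSop, smul_sub]
      simp only [Finset.smul_sum, smul_smul]
      rw [← Finset.sum_sub_distrib]
      refine Finset.sum_congr rfl fun k _ => ?_
      rw [← sub_smul]
      congr 1
      ring
    rw [Finset.sum_congr rfl fun i (_ : i ∈ Finset.univ) => hinner i, Finset.sum_comm,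
      Finset.smul_sum]
    refine Finset.sum_congr rfl fun k _ => ?_
    rw [← Finset.sum_smul, smul_smul, Finset.mul_sum]
  rw [hT3]
  -- collect
  rw [Finset.smul_sum, ← Finset.sum_neg_distrib, ← Finset.sum_add_distrib,
    ← Finset.sum_add_distrib]
  refine Finset.sum_congr rfl fun k _ => ?_
  rw [← neg_smul, ← add_smul, ← add_smul, smul_smul]
  congr 1
  exact master hN2 hx k hI

end SCS

theorem stmt_15 (N d : ℕ) [NeZero N] (hN : 3 ≤ N) (hd : 1 ≤ d)
    (a : ℝ) (ha : 1 / 2 < a) (s : Spin N d) :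
    (∀ x ∈ C2 N,
      H2 a (fun y => mu2 a y • ∑ i : Fin N, Real.cos (2 * (y i - xbar y)) • sComp s i) x =
        (2 * N * a ^ 2 + 4 * (2 * a + 1 - 1 / N)) •
          (mu2 a x • ∑ i : Fin N, Real.cos (2 * (x i - xbar x)) • sComp s i)) ∧
    (∀ x ∈ C2 N,
      H2 a (fun y => mu2 a y • ∑ i : Fin N, Real.sin (2 * (y i - xbar y)) • sComp s i) x =
        (2 * N * a ^ 2 + 4 * (2 * a + 1 - 1 / N)) •
          (mu2 a x • ∑ i : Fin N, Real.sin (2 * (x i - xbar x)) • sComp s i)) := by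
  constructor
  · intro x hx
    exact SCS.main_eig (G := Real.cos) (G' := fun u => -Real.sin u) hN hx a s
      (fun u => Real.hasDerivAt_cos u)
      (fun u => (Real.hasDerivAt_sin u).neg)
      SCS.hI_cos
  · intro x hx
    exact SCS.main_eig (G := Real.sin) (G' := Real.cos) hN hx a s
      (fun u => Real.hasDerivAt_sin u)
      (fun u => Real.hasDerivAt_cos u)
      SCS.hI_sin
end
end

section
/- Fix an integer k ≥ 2 and consider the system of ordinary differential equations for polynomials p, q, g ∈ ℂ[t]: ℒ^{α+1}_{k−1} g = 0, ℒ^{α+3}_{k−2} q = 0, and ℒ^{α−1}_k p = −(α/(Nω)) g − (2β/(Nω²)) t q. Then the space of polynomial solutions (p, q, g) of this system is exactly the linear span of the three triples (L^{(α−1)}_k(t), 0, 0), (−t L^{(α+1)}_{k−1}(t), 0, Nω L^{(α+1)}_{k−1}(t)), and (−β t² L^{(α+3)}_{k−2}(t), Nω²(α+1) L^{(α+3)}_{k−2}(t), 0); in particular each of these triples solves the system, and every polynomial solution is a linear combination of them. -/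
noncomputable section

open Polynomial

/-- The generalized binomial coefficient `C(x, j) = x(x-1)⋯(x-j+1)/j!`. -/
noncomputable def genBinom (x : ℝ) (j : ℕ) : ℝ :=
  (descPochhammer ℝ j).eval x / j.factorial

/-- The generalized Laguerre polynomial
`L^{(λ)}_n = ∑_{k=0}^n (-1)^k C(n+λ, n-k) X^k / k!`, as a polynomial over `ℂ`. -/
noncomputable def laguerreC (lam : ℝ) (n : ℕ) : Polynomial ℂ :=
  ∑ k ∈ Finset.range (n + 1),
    Polynomial.C ((((-1 : ℝ) ^ k * genBinom ((n : ℝ) + lam) (n - k) / k.factorial : ℝ)) : ℂ) *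
      Polynomial.X ^ k

/-- The Laguerre operator `(ℒ^λ_ν f)(t) = t f''(t) + (λ + 1 - t) f'(t) + ν f(t)`,
acting on polynomials over `ℂ`. -/
noncomputable def LagOp (lam nu : ℝ) (f : Polynomial ℂ) : Polynomial ℂ :=
  Polynomial.X * derivative (derivative f)
    + (Polynomial.C ((lam : ℂ) + 1) - Polynomial.X) * derivative f
    + Polynomial.C ((nu : ℝ) : ℂ) * f

lemma genBinom_zero (x : ℝ) : genBinom x 0 = 1 := by
  simp [genBinom]

lemma genBinom_succ (x : ℝ) (j : ℕ) :
    genBinom x (j + 1) = genBinom x j * (x - j) / (j + 1) := by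
  simp only [genBinom, descPochhammer_succ_right, Nat.factorial_succ]
  push_cast
  rw [Polynomial.eval_mul]
  have h1 : (j.factorial : ℝ) ≠ 0 := Nat.cast_ne_zero.mpr j.factorial_ne_zero
  have h2 : (j : ℝ) + 1 ≠ 0 := by positivity
  field_simp
  ring_nf
  simp only [Polynomial.eval_sub, Polynomial.eval_X, Polynomial.eval_natCast]
  ring

lemma coeff_laguerreC (lam : ℝ) (n m : ℕ) :
    (laguerreC lam n).coeff m =
      if m ≤ n then ((((-1 : ℝ) ^ m * genBinom ((n : ℝ) + lam) (n - m) / m.factorial : ℝ)) : ℂ)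
      else 0 := by
  simp [laguerreC, Polynomial.finset_sum_coeff, Polynomial.coeff_C_mul, Polynomial.coeff_X_pow,
    Finset.sum_ite_eq, Nat.lt_succ_iff]

lemma coeff_LagOp (lam nu : ℝ) (f : Polynomial ℂ) (m : ℕ) :
    (LagOp lam nu f).coeff m =
      ((m : ℂ) + 1) * ((m : ℂ) + 1 + lam) * f.coeff (m + 1) + ((nu : ℂ) - m) * f.coeff m := by
  cases m with
  | zero =>
    simp [LagOp, Polynomial.mul_coeff_zero, Polynomial.coeff_derivative, sub_mul,
      Polynomial.coeff_C_mul, Polynomial.coeff_add]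
    ring_nf
    tauto
  | succ m =>
    simp [LagOp, sub_mul, Polynomial.coeff_X_mul, Polynomial.coeff_derivative,
      Polynomial.coeff_C_mul, Polynomial.coeff_add]
    rw [add_mul, one_mul, Polynomial.coeff_add, Polynomial.coeff_C_mul,
      Polynomial.coeff_derivative]
    push_cast
    ring

lemma laguerre_ode (lam : ℝ) (n : ℕ) : LagOp lam (n : ℝ) (laguerreC lam n) = 0 := by
  ext m
  rw [coeff_LagOp, coeff_laguerreC, coeff_laguerreC, Polynomial.coeff_zero]
  by_cases h1 : m + 1 ≤ n
  · have h2 : m ≤ n := by omega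
    rw [if_pos h1, if_pos h2]
    have key : ((m:ℝ)+1) * ((m:ℝ)+1+lam) *
        ((-1:ℝ)^(m+1) * genBinom ((n:ℝ)+lam) (n-(m+1)) / (m+1).factorial) +
        ((n:ℝ) - m) * ((-1:ℝ)^m * genBinom ((n:ℝ)+lam) (n-m) / m.factorial) = 0 := by
      have hnm : n - m = (n - (m + 1)) + 1 := by omega
      rw [hnm, genBinom_succ]
      have e1 : ((n : ℝ) + lam - (n - (m+1) : ℕ)) = lam + m + 1 := by
        push_cast [Nat.cast_sub h1]; ring
      have e2 : (((n - (m+1) : ℕ) : ℝ) + 1) = (n : ℝ) - m := by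
        push_cast [Nat.cast_sub h1]; ring
      rw [e1, e2]
      have hfac : ((m+1).factorial : ℝ) = ((m:ℝ)+1) * m.factorial := by
        rw [Nat.factorial_succ]; push_cast; ring
      have hm : ((m.factorial : ℝ)) ≠ 0 := Nat.cast_ne_zero.mpr m.factorial_ne_zero
      have hm1 : ((m:ℝ) + 1) ≠ 0 := by positivity
      have hnm0 : ((n : ℝ) - m) ≠ 0 := by
        have : (m : ℝ) + 1 ≤ n := by exact_mod_cast h1
        intro h; nlinarith
      rw [hfac]
      field_simp
      ring
    exact_mod_cast key
  · by_cases h2 : m ≤ n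
    · have hm : m = n := by omega
      rw [if_neg h1, if_pos h2, hm]
      push_cast
      ring
    · rw [if_neg h1, if_neg h2]
      ring

lemma genBinom_pos (n : ℕ) (lam : ℝ) (h : -1 < lam) : 0 < genBinom ((n : ℝ) + lam) n := by
  induction n generalizing lam with
  | zero => simp [genBinom_zero]
  | succ n ih =>
    rw [genBinom_succ]
    have e : ((n:ℝ) + 1 + lam) = (n:ℝ) + (lam + 1) := by push_cast; ring
    rw [show ((n+1:ℕ):ℝ) = (n:ℝ)+1 by push_cast; ring, e]
    have h1 : 0 < genBinom ((n:ℝ) + (lam+1)) n := ih (lam+1) (by linarith)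
    have : ((n:ℝ) + (lam+1) - n) = lam + 1 := by ring
    rw [this]
    exact div_pos (mul_pos h1 (by linarith)) (by positivity)

lemma laguerreC_coeff_zero (lam : ℝ) (n : ℕ) :
    (laguerreC lam n).coeff 0 = ((genBinom ((n:ℝ) + lam) n : ℝ) : ℂ) := by
  rw [coeff_laguerreC, if_pos (Nat.zero_le n)]
  norm_num

lemma kernel_zero (lam nu : ℝ) (hlam : -1 < lam) (f : Polynomial ℂ)
    (hf : LagOp lam nu f = 0) (h0 : f.coeff 0 = 0) : f = 0 := by
  have key : ∀ m, f.coeff m = 0 := by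
    intro m
    induction m with
    | zero => exact h0
    | succ m ih =>
      have := congrArg (fun p => Polynomial.coeff p m) hf
      simp only [coeff_LagOp, Polynomial.coeff_zero] at this
      rw [ih, mul_zero, add_zero] at this
      have hne : ((m : ℂ) + 1) * ((m : ℂ) + 1 + lam) ≠ 0 := by
        apply mul_ne_zero
        · exact Nat.cast_add_one_ne_zero m
        · have : ((m : ℂ) + 1 + lam) = (((m:ℝ) + 1 + lam : ℝ) : ℂ) := by push_cast; ring
          rw [this]
          have hpos : (0:ℝ) < (m:ℝ) + 1 + lam := by
            have := Nat.cast_nonneg (α := ℝ) m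
            linarith
          exact_mod_cast ne_of_gt hpos
      exact (mul_eq_zero.mp this).resolve_left hne
  ext m; simp [key m]

lemma LagOp_add (lam nu : ℝ) (f g : Polynomial ℂ) :
    LagOp lam nu (f + g) = LagOp lam nu f + LagOp lam nu g := by
  simp only [LagOp, derivative_add]; ring

lemma LagOp_smul (lam nu : ℝ) (c : ℂ) (f : Polynomial ℂ) :
    LagOp lam nu (c • f) = c • LagOp lam nu f := by
  simp only [LagOp, derivative_smul, Polynomial.smul_eq_C_mul, Polynomial.derivative_C_mul]; ring

lemma LagOp_zero (lam nu : ℝ) : LagOp lam nu 0 = 0 := by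
  simp [LagOp]

lemma LagOp_sub (lam nu : ℝ) (f g : Polynomial ℂ) :
    LagOp lam nu (f - g) = LagOp lam nu f - LagOp lam nu g := by
  simp only [LagOp, derivative_sub]; ring

lemma LagOp_neg (lam nu : ℝ) (f : Polynomial ℂ) :
    LagOp lam nu (-f) = -LagOp lam nu f := by
  have := LagOp_sub lam nu 0 f
  simpa [LagOp_zero] using this

lemma LagOp_X_mul (lam nu : ℝ) (f : Polynomial ℂ) :
    LagOp lam nu (Polynomial.X * f)
      = Polynomial.X * LagOp (lam + 2) (nu - 1) f + Polynomial.C ((lam : ℂ) + 1) * f := by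
  simp only [LagOp, derivative_mul, derivative_add, derivative_X, one_mul, map_add, map_sub,
    map_one]
  push_cast
  simp only [map_add, map_sub, map_neg, map_one, map_ofNat, Polynomial.C_1]
  ring

lemma LagOp_X_sq_mul (lam nu : ℝ) (f : Polynomial ℂ) :
    LagOp lam nu (Polynomial.X ^ 2 * f)
      = Polynomial.X ^ 2 * LagOp (lam + 4) (nu - 2) f
        + Polynomial.C (2 * (lam : ℂ) + 4) * (Polynomial.X * f) := by
  have h : (Polynomial.X ^ 2 * f : Polynomial ℂ) = Polynomial.X * (Polynomial.X * f) := by ring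
  rw [h, LagOp_X_mul, LagOp_X_mul]
  push_cast
  simp only [map_add, map_sub, map_mul, map_neg, map_one, map_ofNat, Polynomial.C_1]
  ring

lemma kernel_uniq (lam nu : ℝ) (hlam : -1 < lam) (f h : Polynomial ℂ)
    (hf : LagOp lam nu f = 0) (hh : LagOp lam nu h = 0) (h0 : h.coeff 0 ≠ 0) :
    f = (f.coeff 0 / h.coeff 0) • h := by
  have hz : LagOp lam nu (f - (f.coeff 0 / h.coeff 0) • h) = 0 := by
    rw [LagOp_sub, LagOp_smul, hf, hh, smul_zero, sub_zero]
  have hc : (f - (f.coeff 0 / h.coeff 0) • h).coeff 0 = 0 := by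
    simp only [Polynomial.coeff_sub, Polynomial.coeff_smul, smul_eq_mul]
    rw [div_mul_cancel₀ _ h0, sub_self]
  have := kernel_zero lam nu hlam _ hz hc
  exact sub_eq_zero.mp this

theorem stmt_19 (N : ℕ) (hN : 3 ≤ N) (a b ω : ℝ)
    (ha : 1 / 2 < a) (hb : 1 / 2 < b) (hω : 0 < ω)
    (k : ℕ) (hk : 2 ≤ k) :
    {v : Polynomial ℂ × Polynomial ℂ × Polynomial ℂ |
        LagOp ((N : ℝ) * (2 * a + b + 1 / 2) + 1) ((k : ℝ) - 1) v.2.2 = 0 ∧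
        LagOp ((N : ℝ) * (2 * a + b + 1 / 2) + 3) ((k : ℝ) - 2) v.2.1 = 0 ∧
        LagOp ((N : ℝ) * (2 * a + b + 1 / 2) - 1) (k : ℝ) v.1 =
          -(Polynomial.C ((((N : ℝ) * (2 * a + b + 1 / 2)) / ((N : ℝ) * ω) : ℝ) : ℂ) * v.2.2)
          - Polynomial.C (((2 * ((N : ℝ) * (4 * a + b + 3 / 2)) / ((N : ℝ) * ω ^ 2)) : ℝ) : ℂ) *
              (Polynomial.X * v.2.1)} =
      (Submodule.span ℂ
        ({(laguerreC ((N : ℝ) * (2 * a + b + 1 / 2) - 1) k, 0, 0),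
          (-(Polynomial.X * laguerreC ((N : ℝ) * (2 * a + b + 1 / 2) + 1) (k - 1)), 0,
            Polynomial.C (((N : ℝ) * ω : ℝ) : ℂ) *
              laguerreC ((N : ℝ) * (2 * a + b + 1 / 2) + 1) (k - 1)),
          (-(Polynomial.C (((N : ℝ) * (4 * a + b + 3 / 2) : ℝ) : ℂ)) * Polynomial.X ^ 2 *
              laguerreC ((N : ℝ) * (2 * a + b + 1 / 2) + 3) (k - 2),
            Polynomial.C (((N : ℝ) * ω ^ 2 * ((N : ℝ) * (2 * a + b + 1 / 2) + 1) : ℝ) : ℂ) *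
              laguerreC ((N : ℝ) * (2 * a + b + 1 / 2) + 3) (k - 2), 0)} :
          Set (Polynomial ℂ × Polynomial ℂ × Polynomial ℂ)) : Set _) := by
  have hN3 : (3:ℝ) ≤ (N:ℝ) := by exact_mod_cast hN
  set A : ℝ := (N : ℝ) * (2 * a + b + 1 / 2) with hA_def
  set B : ℝ := (N : ℝ) * (4 * a + b + 3 / 2) with hB_def
  have hN0 : (0:ℝ) < N := by linarith
  have hApos : 0 < A := by
    have : (0:ℝ) < 2 * a + b + 1 / 2 := by linarith
    exact mul_pos hN0 this
  have hNω : (N:ℝ) * ω ≠ 0 := by positivity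
  have hNω2 : (N:ℝ) * ω ^ 2 ≠ 0 := by positivity
  have hk1 : ((k - 1 : ℕ) : ℝ) = (k : ℝ) - 1 := by
    have h1 : 1 ≤ k := by omega
    push_cast [Nat.cast_sub h1]; ring
  have hk2 : ((k - 2 : ℕ) : ℝ) = (k : ℝ) - 2 := by
    push_cast [Nat.cast_sub hk]; ring
  set L1 := laguerreC (A - 1) k with hL1_def
  set L2 := laguerreC (A + 1) (k - 1) with hL2_def
  set L3 := laguerreC (A + 3) (k - 2) with hL3_def
  have hode1 : LagOp (A - 1) (k : ℝ) L1 = 0 := laguerre_ode (A - 1) k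
  have hode2 : LagOp (A + 1) ((k : ℝ) - 1) L2 = 0 := by
    have := laguerre_ode (A + 1) (k - 1); rwa [hk1] at this
  have hode3 : LagOp (A + 3) ((k : ℝ) - 2) L3 = 0 := by
    have := laguerre_ode (A + 3) (k - 2); rwa [hk2] at this
  have keyg : LagOp (A + 1) ((k : ℝ) - 1) (Polynomial.C (((N:ℝ) * ω : ℝ) : ℂ) * L2) = 0 := by
    rw [← Polynomial.smul_eq_C_mul, LagOp_smul, hode2, smul_zero]
  have keyq : LagOp (A + 3) ((k : ℝ) - 2)
      (Polynomial.C (((N:ℝ) * ω ^ 2 * (A + 1) : ℝ) : ℂ) * L3) = 0 := by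
    rw [← Polynomial.smul_eq_C_mul, LagOp_smul, hode3, smul_zero]
  have key2 : LagOp (A - 1) (k : ℝ) (-(Polynomial.X * L2))
      = -(Polynomial.C ((A : ℝ) : ℂ) * L2) := by
    have h := LagOp_X_mul (A - 1) (k : ℝ) L2
    rw [show A - 1 + 2 = A + 1 from by ring] at h
    rw [LagOp_neg, h, hode2, mul_zero, zero_add]
    rw [show (((A - 1 : ℝ)) : ℂ) + 1 = ((A : ℝ) : ℂ) from by push_cast; ring]
  have key3 : LagOp (A - 1) (k : ℝ)
        (-(Polynomial.C ((B : ℝ) : ℂ)) * Polynomial.X ^ 2 * L3)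
      = -(Polynomial.C ((2 * B * (A + 1) : ℝ) : ℂ) * (Polynomial.X * L3)) := by
    have hrw : (-(Polynomial.C ((B : ℝ) : ℂ)) * Polynomial.X ^ 2 * L3 : Polynomial ℂ)
        = (-((B:ℝ) : ℂ)) • (Polynomial.X ^ 2 * L3) := by
      rw [Polynomial.smul_eq_C_mul, map_neg]; ring
    rw [hrw, LagOp_smul]
    have h := LagOp_X_sq_mul (A - 1) (k : ℝ) L3
    rw [show A - 1 + 4 = A + 3 from by ring] at h
    rw [h, hode3, mul_zero, zero_add, Polynomial.smul_eq_C_mul, ← mul_assoc, ← map_mul]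
    rw [show (-((B:ℝ) : ℂ)) * (2 * (((A - 1 : ℝ)) : ℂ) + 4) = -((2 * B * (A + 1) : ℝ) : ℂ)
      from by push_cast; ring]
    rw [map_neg, neg_mul]
  have id2 : -(Polynomial.C ((A / ((N:ℝ) * ω) : ℝ) : ℂ) *
        (Polynomial.C (((N:ℝ) * ω : ℝ) : ℂ) * L2))
      = -(Polynomial.C ((A : ℝ) : ℂ) * L2) := by
    rw [← mul_assoc, ← map_mul, ← Complex.ofReal_mul, div_mul_cancel₀ A hNω]
  have id3 : Polynomial.C ((2 * B / ((N:ℝ) * ω ^ 2) : ℝ) : ℂ) *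
        (Polynomial.X * (Polynomial.C (((N:ℝ) * ω ^ 2 * (A + 1) : ℝ) : ℂ) * L3))
      = Polynomial.C ((2 * B * (A + 1) : ℝ) : ℂ) * (Polynomial.X * L3) := by
    have hrw : (Polynomial.X * (Polynomial.C (((N:ℝ) * ω ^ 2 * (A + 1) : ℝ) : ℂ) * L3)
        : Polynomial ℂ)
        = Polynomial.C (((N:ℝ) * ω ^ 2 * (A + 1) : ℝ) : ℂ) * (Polynomial.X * L3) := by ring
    rw [hrw, ← mul_assoc, ← map_mul, ← Complex.ofReal_mul,
      show 2 * B / ((N:ℝ) * ω ^ 2) * ((N:ℝ) * ω ^ 2 * (A + 1)) = 2 * B * (A + 1)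
        from by field_simp]
  apply Set.eq_of_subset_of_subset
  · intro v hv
    simp only [Set.mem_setOf_eq] at hv
    obtain ⟨h1, h2, h3⟩ := hv
    have hc2 : (Polynomial.C (((N:ℝ) * ω : ℝ) : ℂ) * L2).coeff 0 ≠ 0 := by
      rw [Polynomial.coeff_C_mul, hL2_def, laguerreC_coeff_zero]
      apply mul_ne_zero
      · exact_mod_cast hNω
      · exact_mod_cast ne_of_gt (genBinom_pos (k - 1) (A + 1) (by linarith))
    set c2 : ℂ := v.2.2.coeff 0 / (Polynomial.C (((N:ℝ) * ω : ℝ) : ℂ) * L2).coeff 0 with hc2_def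
    have hg : v.2.2 = c2 • (Polynomial.C (((N:ℝ) * ω : ℝ) : ℂ) * L2) :=
      kernel_uniq (A + 1) ((k:ℝ) - 1) (by linarith) _ _ h1 keyg hc2
    have hc3 : (Polynomial.C (((N:ℝ) * ω ^ 2 * (A + 1) : ℝ) : ℂ) * L3).coeff 0 ≠ 0 := by
      rw [Polynomial.coeff_C_mul, hL3_def, laguerreC_coeff_zero]
      apply mul_ne_zero
      · have h5 : (N:ℝ) * ω ^ 2 * (A + 1) ≠ 0 := by positivity
        exact_mod_cast h5
      · exact_mod_cast ne_of_gt (genBinom_pos (k - 2) (A + 3) (by linarith))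
    set c3 : ℂ := v.2.1.coeff 0 /
      (Polynomial.C (((N:ℝ) * ω ^ 2 * (A + 1) : ℝ) : ℂ) * L3).coeff 0 with hc3_def
    have hq : v.2.1 = c3 • (Polynomial.C (((N:ℝ) * ω ^ 2 * (A + 1) : ℝ) : ℂ) * L3) :=
      kernel_uniq (A + 3) ((k:ℝ) - 2) (by linarith) _ _ h2 keyq hc3
    have hp0 : LagOp (A - 1) (k : ℝ)
        (v.1 - (c2 • (-(Polynomial.X * L2))
          + c3 • (-(Polynomial.C ((B : ℝ) : ℂ)) * Polynomial.X ^ 2 * L3))) = 0 := by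
      rw [LagOp_sub, LagOp_add, LagOp_smul, LagOp_smul, key2, key3, h3, hg, hq]
      have e2 : -(Polynomial.C ((A / ((N:ℝ) * ω) : ℝ) : ℂ) *
            (c2 • (Polynomial.C (((N:ℝ) * ω : ℝ) : ℂ) * L2)))
          = c2 • (-(Polynomial.C ((A : ℝ) : ℂ) * L2)) := by
        rw [mul_smul_comm, ← smul_neg, id2]
      have e3 : Polynomial.C ((2 * B / ((N:ℝ) * ω ^ 2) : ℝ) : ℂ) *
            (Polynomial.X * (c3 • (Polynomial.C (((N:ℝ) * ω ^ 2 * (A + 1) : ℝ) : ℂ) * L3)))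
          = c3 • (Polynomial.C ((2 * B * (A + 1) : ℝ) : ℂ) * (Polynomial.X * L3)) := by
        rw [mul_smul_comm, mul_smul_comm, id3]
      rw [e2, e3]
      simp only [smul_neg]
      abel
    have hc1 : L1.coeff 0 ≠ 0 := by
      rw [hL1_def, laguerreC_coeff_zero]
      exact_mod_cast ne_of_gt (genBinom_pos k (A - 1) (by linarith))
    set c1 : ℂ := (v.1 - (c2 • (-(Polynomial.X * L2))
      + c3 • (-(Polynomial.C ((B : ℝ) : ℂ)) * Polynomial.X ^ 2 * L3))).coeff 0 / L1.coeff 0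
      with hc1_def
    have hp : v.1 - (c2 • (-(Polynomial.X * L2))
        + c3 • (-(Polynomial.C ((B : ℝ) : ℂ)) * Polynomial.X ^ 2 * L3)) = c1 • L1 :=
      kernel_uniq (A - 1) (k : ℝ) (by linarith) _ _ hp0 hode1 hc1
    show v ∈ Submodule.span ℂ _
    have hv_eq : v = c1 • (L1, (0 : Polynomial ℂ), (0 : Polynomial ℂ))
        + c2 • (-(Polynomial.X * L2), (0 : Polynomial ℂ),
            Polynomial.C (((N:ℝ) * ω : ℝ) : ℂ) * L2)
        + c3 • (-(Polynomial.C ((B : ℝ) : ℂ)) * Polynomial.X ^ 2 * L3,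
            Polynomial.C (((N:ℝ) * ω ^ 2 * (A + 1) : ℝ) : ℂ) * L3, (0 : Polynomial ℂ)) := by
      have hv' : v = (v.1, v.2.1, v.2.2) := rfl
      rw [hv']
      simp only [Prod.smul_mk, Prod.mk_add_mk, smul_zero, add_zero, zero_add, Prod.mk.injEq]
      refine ⟨?_, ?_, ?_⟩
      · rw [← hp]; abel
      · rw [hq]
      · rw [hg]
    rw [hv_eq]
    apply Submodule.add_mem
    apply Submodule.add_mem
    · exact Submodule.smul_mem _ _ (Submodule.subset_span (Set.mem_insert _ _))
    · exact Submodule.smul_mem _ _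
        (Submodule.subset_span (Set.mem_insert_of_mem _ (Set.mem_insert _ _)))
    · exact Submodule.smul_mem _ _
        (Submodule.subset_span (Set.mem_insert_of_mem _
          (Set.mem_insert_of_mem _ (Set.mem_singleton _))))
  · intro v hv
    replace hv : v ∈ Submodule.span ℂ _ := hv
    simp only [Set.mem_setOf_eq]
    induction hv using Submodule.span_induction with
    | mem x hx =>
      simp only [Set.mem_insert_iff, Set.mem_singleton_iff] at hx
      rcases hx with rfl | rfl | rfl
      · refine ⟨LagOp_zero _ _, LagOp_zero _ _, ?_⟩
        simp [hode1]
      · refine ⟨keyg, LagOp_zero _ _, ?_⟩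
        simp only
        rw [key2, ← id2]
        simp
      · refine ⟨LagOp_zero _ _, keyq, ?_⟩
        simp only
        rw [key3, id3]
        simp
    | zero =>
      refine ⟨LagOp_zero _ _, LagOp_zero _ _, ?_⟩
      simp [LagOp_zero]
    | add x y hx hy ihx ihy =>
      obtain ⟨hx1, hx2, hx3⟩ := ihx
      obtain ⟨hy1, hy2, hy3⟩ := ihy
      refine ⟨?_, ?_, ?_⟩
      · simp only [Prod.snd_add, LagOp_add, hx1, hy1, add_zero]
      · simp only [Prod.snd_add, Prod.fst_add, LagOp_add, hx2, hy2, add_zero]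
      · simp only [Prod.snd_add, Prod.fst_add, LagOp_add, hx3, hy3, mul_add]
        ring
    | smul c x hx ih =>
      obtain ⟨hx1, hx2, hx3⟩ := ih
      refine ⟨?_, ?_, ?_⟩
      · simp only [Prod.smul_snd, LagOp_smul, hx1, smul_zero]
      · simp only [Prod.smul_snd, Prod.smul_fst, LagOp_smul, hx2, smul_zero]
      · simp only [Prod.smul_snd, Prod.smul_fst, LagOp_smul, hx3]
        simp only [smul_sub, smul_neg, mul_smul_comm]
end
end
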